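/- arXiv:1305.2353 — 4 statements merged into one kernel-verified Lean document; each statement's English description precedes it below -/
import Mathlib

section
/- Let n, p be natural numbers with p ≤ n, let A₀ : Fin n → Fin p → ℝ, let C₀ : Fin p → Fin p → ℝ, and let σ : Fin n → Fin p assign each row index i with p ≤ i to a group. Fix m ≤ p and suppose that for each q < m the matrices A_{q+1} and C_{q+1} are defined from A_q and C_q by the Schur-complement update A_{q+1}(i,k) = A_q(i,k) − A_q(i,q)·A_q(k,q)/A_q(q,q) and the worst-case compressed update C_{q+1}(j,k) = C_q(j,k) + C_q(j,q)·|A_q(k,q)|/|A_q(q,q)|, where each pivot satisfies A_q(q,q) ≠ 0. If initially |A₀(i,k)| ≤ C₀(σ(i),k) for every row i with p ≤ i and every column k, then for every q ≤ m, every row i with p ≤ i, and every column k, |A_q(i,k)| ≤ C_q(σ(i),k). -/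
/-! The Schur update of an entry of `A₂₁` is bounded, by the triangle inequality, by the
worst-case update of the dominating compressed entries; induct on the number of pivots. -/

theorem abs_sub_mul_div_le {K : Type*} [Field K] [LinearOrder K] [IsStrictOrderedRing K]
    {a b c c' : K} (e d : K) (ha : |a| ≤ c) (hb : |b| ≤ c') :
    |a - b * e / d| ≤ c + c' * |e| / |d| :=
  calc |a - b * e / d| ≤ |a| + |b| * |e| / |d| := by
        rw [← abs_mul, ← abs_div]
        exact abs_sub _ _
    _ ≤ c + c' * |e| / |d| := by gcongr

theorem strict_compressed_pivoting_domination_general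
    (n p : ℕ) (hpn : p ≤ n)
    (A : ℕ → Fin n → Fin p → ℝ) (C : ℕ → Fin p → Fin p → ℝ)
    (σ : Fin n → Fin p) (m : ℕ) (hm : m ≤ p)
    (hA : ∀ q (hq : q < m), ∀ (i : Fin n) (k : Fin p),
      A (q + 1) i k =
        A q i k -
          A q i ⟨q, lt_of_lt_of_le hq hm⟩ *
            A q ⟨k, lt_of_lt_of_le k.2 hpn⟩ ⟨q, lt_of_lt_of_le hq hm⟩ /
              A q ⟨q, lt_of_lt_of_le (lt_of_lt_of_le hq hm) hpn⟩ ⟨q, lt_of_lt_of_le hq hm⟩)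
    (hC : ∀ q (hq : q < m), ∀ (j k : Fin p),
      C (q + 1) j k =
        C q j k +
          C q j ⟨q, lt_of_lt_of_le hq hm⟩ *
            |A q ⟨k, lt_of_lt_of_le k.2 hpn⟩ ⟨q, lt_of_lt_of_le hq hm⟩| /
              |A q ⟨q, lt_of_lt_of_le (lt_of_lt_of_le hq hm) hpn⟩ ⟨q, lt_of_lt_of_le hq hm⟩|)
    (hinit : ∀ (i : Fin n), p ≤ (i : ℕ) → ∀ (k : Fin p), |A 0 i k| ≤ C 0 (σ i) k) :
    ∀ q ≤ m, ∀ (i : Fin n), p ≤ (i : ℕ) → ∀ (k : Fin p),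
      |A q i k| ≤ C q (σ i) k := by
  intro q
  induction q with
  | zero => exact fun _ => hinit
  | succ q ih =>
    intro (hqm : q < m) i hi k
    have hdom := ih hqm.le i hi
    rw [hA q hqm i k, hC q hqm (σ i) k]
    exact abs_sub_mul_div_le _ _ (hdom k) (hdom _)

/-- Lemma 5.1 (SCP1): for a sequence of 1×1 pivots in strict compressed
pivoting, the compressed matrix rows dominate the rows of `A₂₁`
entrywise in absolute value throughout the elimination. -/
theorem strict_compressed_pivoting_domination
    (n p : ℕ) (hpn : p ≤ n)
    (A : ℕ → Fin n → Fin p → ℝ) (C : ℕ → Fin p → Fin p → ℝ)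
    (σ : Fin n → Fin p) (m : ℕ) (hm : m ≤ p)
    (hpiv : ∀ q (hq : q < m),
      A q ⟨q, lt_of_lt_of_le (lt_of_lt_of_le hq hm) hpn⟩ ⟨q, lt_of_lt_of_le hq hm⟩ ≠ 0)
    (hA : ∀ q (hq : q < m), ∀ (i : Fin n) (k : Fin p),
      A (q + 1) i k =
        A q i k -
          A q i ⟨q, lt_of_lt_of_le hq hm⟩ *
            A q ⟨k, lt_of_lt_of_le k.2 hpn⟩ ⟨q, lt_of_lt_of_le hq hm⟩ /
              A q ⟨q, lt_of_lt_of_le (lt_of_lt_of_le hq hm) hpn⟩ ⟨q, lt_of_lt_of_le hq hm⟩)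
    (hC : ∀ q (hq : q < m), ∀ (j k : Fin p),
      C (q + 1) j k =
        C q j k +
          C q j ⟨q, lt_of_lt_of_le hq hm⟩ *
            |A q ⟨k, lt_of_lt_of_le k.2 hpn⟩ ⟨q, lt_of_lt_of_le hq hm⟩| /
              |A q ⟨q, lt_of_lt_of_le (lt_of_lt_of_le hq hm) hpn⟩ ⟨q, lt_of_lt_of_le hq hm⟩|)
    (hinit : ∀ (i : Fin n), p ≤ (i : ℕ) → ∀ (k : Fin p), |A 0 i k| ≤ C 0 (σ i) k) :
    ∀ q ≤ m, ∀ (i : Fin n), p ≤ (i : ℕ) → ∀ (k : Fin p),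
      |A q i k| ≤ C q (σ i) k :=
  strict_compressed_pivoting_domination_general n p hpn A C σ m hm hA hC hinit
end

section
/- Let u be a real number with 0 < u ≤ 1/2, and let d, γ, μ, x, v, w be real numbers with d ≠ 0, γ ≥ 0, |d| ≥ u·γ, |v| ≤ γ, |w| ≤ γ, |x| ≤ μ, and γ ≤ μ. Then the updated entry after a 1×1 pivot satisfies |x − v·w/d| ≤ μ·(1 + u⁻¹), and the corresponding entry of the factor L satisfies |v/d| ≤ u⁻¹. -/
section PivotBounds

variable {α : Type*} [Field α] [LinearOrder α] [IsStrictOrderedRing α]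

theorem abs_div_le_inv_of_threshold {u d γ v : α} (hu : 0 < u) (hthresh : u * γ ≤ |d|)
    (hv : |v| ≤ γ) : |v / d| ≤ u⁻¹ := by
  rw [abs_div]
  exact div_le_of_le_mul₀ (abs_nonneg d) (inv_nonneg.mpr hu.le)
    (hv.trans ((le_inv_mul_iff₀ hu).mpr hthresh))

theorem abs_sub_mul_div_le_mul_one_add {x v w d μ L : α} (hL : |v / d| ≤ L) (hw : |w| ≤ μ)
    (hx : |x| ≤ μ) : |x - v * w / d| ≤ μ * (1 + L) := by
  have hupdate : |v * w / d| ≤ L * μ := by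
    rw [mul_div_right_comm, abs_mul]
    exact mul_le_mul hL hw (abs_nonneg w) ((abs_nonneg _).trans hL)
  calc |x - v * w / d| ≤ |x| + |v * w / d| := abs_sub _ _
    _ ≤ μ + L * μ := add_le_add hx hupdate
    _ = μ * (1 + L) := by ring

end PivotBounds

theorem scp2_one_by_one_pivot_general
    (u d γ μ x v w : ℝ) (hu : 0 < u)
    (hthresh : |d| ≥ u * γ)
    (hv : |v| ≤ γ) (hw : |w| ≤ γ) (hx : |x| ≤ μ) (hγμ : γ ≤ μ) :
    |x - v * w / d| ≤ μ * (1 + u⁻¹) ∧ |v / d| ≤ u⁻¹ := by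
  have hL : |v / d| ≤ u⁻¹ := abs_div_le_inv_of_threshold hu hthresh hv
  exact ⟨abs_sub_mul_div_le_mul_one_add hL (hw.trans hγμ) hx, hL⟩

/-- Theorem 5.2 (SCP2), 1×1-pivot case, stated per entry: if the pivot `d`
passes the threshold test `|d| ≥ u·γ`, then the updated entry is bounded by
`μ(1 + u⁻¹)` and the entry of `L` is bounded by `u⁻¹`. -/
theorem scp2_one_by_one_pivot
    (u d γ μ x v w : ℝ) (hu : 0 < u) (hu2 : u ≤ 1 / 2)
    (hd : d ≠ 0) (hγ : 0 ≤ γ) (hthresh : |d| ≥ u * γ)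
    (hv : |v| ≤ γ) (hw : |w| ≤ γ) (hx : |x| ≤ μ) (hγμ : γ ≤ μ) :
    |x - v * w / d| ≤ μ * (1 + u⁻¹) ∧ |v / d| ≤ u⁻¹ :=
  scp2_one_by_one_pivot_general u d γ μ x v w hu hthresh hv hw hx hγμ
end

section
/- Let u > 0, let D be an invertible 2×2 real matrix, and let γ : Fin 2 → ℝ be nonnegative with Σ_s |D⁻¹(r,s)|·γ(s) ≤ u⁻¹ for each r ∈ Fin 2. Let x, μ be real numbers and v, w : Fin 2 → ℝ be such that |v(s)| ≤ γ(s) for each s, |w(r)| ≤ μ for each r, |x| ≤ μ, and μ ≥ 0. Then |x − Σ_{r,s} w(r)·D⁻¹(r,s)·v(s)| ≤ μ·(1 + 2u⁻¹). -/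
open Matrix BigOperators

lemma abs_sum_mul_mul_le {κ : Type*} [Fintype κ] (a : ℝ) (c v γ : κ → ℝ)
    (hv : ∀ s, |v s| ≤ γ s) :
    |∑ s, a * c s * v s| ≤ |a| * ∑ s, |c s| * γ s := by
  calc |∑ s, a * c s * v s| ≤ ∑ s, |a * c s * v s| := Finset.abs_sum_le_sum_abs _ _
    _ = |a| * ∑ s, |c s| * |v s| := by simp only [abs_mul, Finset.mul_sum, mul_assoc]
    _ ≤ |a| * ∑ s, |c s| * γ s := by
        gcongr with s
        exact hv s

lemma abs_sum_sum_mul_mul_le {ι κ : Type*} [Fintype ι] [Fintype κ] (A : Matrix ι κ ℝ)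
    (w : ι → ℝ) (v γ : κ → ℝ) (μ τ : ℝ)
    (hv : ∀ s, |v s| ≤ γ s) (hw : ∀ r, |w r| ≤ μ) (hA : ∀ r, ∑ s, |A r s| * γ s ≤ τ) :
    |∑ r, ∑ s, w r * A r s * v s| ≤ Fintype.card ι * (μ * τ) := by
  have hrow : ∀ r, |∑ s, w r * A r s * v s| ≤ μ * τ := fun r => by
    have hγ : 0 ≤ ∑ s, |A r s| * γ s :=
      Finset.sum_nonneg fun s _ => mul_nonneg (abs_nonneg _) ((abs_nonneg _).trans (hv s))
    calc |∑ s, w r * A r s * v s| ≤ |w r| * ∑ s, |A r s| * γ s := abs_sum_mul_mul_le _ _ _ _ hv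
      _ ≤ μ * τ := mul_le_mul (hw r) (hA r) hγ ((abs_nonneg _).trans (hw r))
  calc |∑ r, ∑ s, w r * A r s * v s| ≤ ∑ r, |∑ s, w r * A r s * v s| :=
        Finset.abs_sum_le_sum_abs _ _
    _ ≤ ∑ _r : ι, μ * τ := Finset.sum_le_sum fun r _ => hrow r
    _ = Fintype.card ι * (μ * τ) := by simp

theorem scp2_two_by_two_growth_general
    (u : ℝ)
    (D : Matrix (Fin 2) (Fin 2) ℝ)
    (γ : Fin 2 → ℝ)
    (hthresh : ∀ r, ∑ s, |D⁻¹ r s| * γ s ≤ u⁻¹)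
    (x μ : ℝ) (v w : Fin 2 → ℝ)
    (hv : ∀ s, |v s| ≤ γ s) (hw : ∀ r, |w r| ≤ μ)
    (hx : |x| ≤ μ) :
    |x - ∑ r, ∑ s, w r * D⁻¹ r s * v s| ≤ μ * (1 + 2 * u⁻¹) := by
  have hupdate := abs_sum_sum_mul_mul_le D⁻¹ w v γ μ u⁻¹ hv hw hthresh
  rw [Fintype.card_fin, Nat.cast_ofNat] at hupdate
  calc |x - ∑ r, ∑ s, w r * D⁻¹ r s * v s|
      ≤ |x| + |∑ r, ∑ s, w r * D⁻¹ r s * v s| := abs_sub _ _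
    _ ≤ μ * (1 + 2 * u⁻¹) := by linarith

/-- Theorem 5.2 (SCP2), 2×2-pivot growth bound, stated per entry. -/
theorem scp2_two_by_two_growth
    (u : ℝ) (hu : 0 < u)
    (D : Matrix (Fin 2) (Fin 2) ℝ) (hD : IsUnit D.det)
    (γ : Fin 2 → ℝ) (hγ : ∀ s, 0 ≤ γ s)
    (hthresh : ∀ r, ∑ s, |D⁻¹ r s| * γ s ≤ u⁻¹)
    (x μ : ℝ) (v w : Fin 2 → ℝ)
    (hv : ∀ s, |v s| ≤ γ s) (hw : ∀ r, |w r| ≤ μ)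
    (hx : |x| ≤ μ) (hμ : 0 ≤ μ) :
    |x - ∑ r, ∑ s, w r * D⁻¹ r s * v s| ≤ μ * (1 + 2 * u⁻¹) :=
  scp2_two_by_two_growth_general u D γ hthresh x μ v w hv hw hx
end

section
/- Let u and ε be real numbers with 0 < u ≤ 1/2 and 0 < ε < 1/(2u). Let A be the 5×2 real matrix whose rows are (1, −1), (−1, 2), (u⁻¹, 0), (0, u⁻¹), (u⁻¹ − ε, u⁻¹ − ε). Perform two steps of symmetric Gaussian elimination with 1×1 diagonal pivots: set l(i,1) = A(i,1)/A(1,1) for i ≥ 1, A'(i,2) = A(i,2) − A(i,1)·A(2,1)/A(1,1) for i ≥ 2, and l(i,2) = A'(i,2)/A'(2,2) for i ≥ 2. Then: (i) A'(2,2) = 1; (ii) both pivots pass the threshold test with respect to rows 2–4 only, i.e. |A(1,1)| ≥ u · max(|A(2,1)|, |A(3,1)|, |A(4,1)|) and |A'(2,2)| ≥ u · max(|A'(3,2)|, |A'(4,2)|); yet (iii) l(5,2) = 2(u⁻¹ − ε) > u⁻¹. -/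
/-!
Row 5 is never tested because its entries `u⁻¹ - ε` lie below the column maxima `u⁻¹`. Since
`A(2,1) = -1`, the first elimination step subtracts `l(5,1) · A(2,1) = -(u⁻¹ - ε)` from its second
entry, doubling it, while the second pivot `2 - 1 = 1` passes the test; dividing by that pivot
leaves `l(5,2) = 2(u⁻¹ - ε)`, which exceeds `u⁻¹` as soon as `ε < u⁻¹ / 2`.
-/

open Matrix

lemma inv_lt_two_mul_inv_sub {u ε : ℝ} (hu : 0 < u) (hε : ε < 1 / (2 * u)) :
    u⁻¹ < 2 * (u⁻¹ - ε) := by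
  have : 1 / (2 * u) = u⁻¹ / 2 := by field_simp
  linarith

theorem relaxed_compressed_counterexample_general
    (u ε : ℝ) (hu : 0 < u) (hu2 : u ≤ 1 / 2) (hε2 : ε < 1 / (2 * u))
    (A : Matrix (Fin 5) (Fin 2) ℝ)
    (hA : A = !![1, -1; -1, 2; u⁻¹, 0; 0, u⁻¹; u⁻¹ - ε, u⁻¹ - ε])
    (A' : Fin 5 → ℝ) (hA' : ∀ i, A' i = A i 1 - A i 0 * A 1 0 / A 0 0)
    (l₂ : Fin 5 → ℝ) (hl₂ : ∀ i, l₂ i = A' i / A' 1) :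
    A' 1 = 1 ∧
    |A 0 0| ≥ u * max (|A 1 0|) (max (|A 2 0|) (|A 3 0|)) ∧
    |A' 1| ≥ u * max (|A' 2|) (|A' 3|) ∧
    l₂ 4 = 2 * (u⁻¹ - ε) ∧ l₂ 4 > u⁻¹ := by
  have hu_inv : 0 < u⁻¹ := inv_pos.mpr hu
  have hone_le : 1 ≤ u⁻¹ := (one_le_inv₀ hu).mpr (by linarith)
  have hpivot : A' 1 = 1 := by simp [hA', hA]; ring
  have hA'₂ : A' 2 = u⁻¹ := by simp [hA', hA]
  have hA'₃ : A' 3 = u⁻¹ := by simp [hA', hA]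
  have hA'₄ : A' 4 = 2 * (u⁻¹ - ε) := by simp [hA', hA]; ring
  have hl₂₄ : l₂ 4 = 2 * (u⁻¹ - ε) := by rw [hl₂, hpivot, hA'₄, div_one]
  refine ⟨hpivot, ?_, ?_, hl₂₄, hl₂₄ ▸ inv_lt_two_mul_inv_sub hu hε2⟩
  · have hcol : max |A 1 0| (max |A 2 0| |A 3 0|) = u⁻¹ := by
      simp [hA, abs_of_pos hu, hu.le, hone_le]
    rw [hcol, show A 0 0 = 1 by simp [hA], abs_one, mul_inv_cancel₀ hu.ne']
  · rw [hpivot, hA'₂, hA'₃, abs_one, max_self, abs_of_pos hu_inv,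
      mul_inv_cancel₀ hu.ne']

/-- The explicit counterexample in Section 5 of the paper showing that relaxed
compressed pivoting does not bound the entries of the factor `L` by `u⁻¹`. -/
theorem relaxed_compressed_counterexample
    (u ε : ℝ) (hu : 0 < u) (hu2 : u ≤ 1 / 2) (hε : 0 < ε) (hε2 : ε < 1 / (2 * u))
    (A : Matrix (Fin 5) (Fin 2) ℝ)
    (hA : A = !![1, -1; -1, 2; u⁻¹, 0; 0, u⁻¹; u⁻¹ - ε, u⁻¹ - ε])
    (l₁ : Fin 5 → ℝ) (hl₁ : ∀ i, l₁ i = A i 0 / A 0 0)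
    (A' : Fin 5 → ℝ) (hA' : ∀ i, A' i = A i 1 - A i 0 * A 1 0 / A 0 0)
    (l₂ : Fin 5 → ℝ) (hl₂ : ∀ i, l₂ i = A' i / A' 1) :
    A' 1 = 1 ∧
    |A 0 0| ≥ u * max (|A 1 0|) (max (|A 2 0|) (|A 3 0|)) ∧
    |A' 1| ≥ u * max (|A' 2|) (|A' 3|) ∧
    l₂ 4 = 2 * (u⁻¹ - ε) ∧ l₂ 4 > u⁻¹ :=
  relaxed_compressed_counterexample_general u ε hu hu2 hε2 A hA A' hA' l₂ hl₂
end
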